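/- Let a > 0 and c > 0. Then ∫₀^∞ (1 − e^{−c/t})·a·e^{−a(t+s)} dt = e^{−as}·(1 − 2√(ac)·K₁(2√(ac))) for any s ≥ 0, where K₁ is the modified Bessel function of the second kind of order 1. -/

import Mathlib

open Real MeasureTheory

/-- The modified Bessel function of the second kind of order 1, via its
standard integral representation `K₁(x) = ∫₀^∞ e^{-x cosh t} cosh t dt`. -/
noncomputable def besselK1 (x : ℝ) : ℝ :=
  ∫ t in Set.Ioi (0:ℝ), Real.exp (-x * Real.cosh t) * Real.cosh t

/-!
Since `1 - e^{-c/t}` splits the integrand, everything reduces to the integral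
`∫₀^∞ e^{-(a t + c/t)} dt`. The substitution `t = √(c/a) eᵘ` over the whole line turns
`a t + c/t` into `2√(ac) cosh u` and `dt` into `t du`, giving `∫_ℝ eᵘ e^{-x cosh u} du` with
`x = 2√(ac)`. As `u ↦ e^{-x cosh u}` is even, only the even part `cosh u` of `eᵘ` survives,
which leaves `2 ∫₀^∞ cosh u e^{-x cosh u} du = 2 K₁(x)`.
-/
section ExpSubstitution

variable {E : Type*} [NormedAddCommGroup E] [NormedSpace ℝ E] {b : ℝ}

lemma image_const_mul_exp (hb : 0 < b) : (fun u => b * exp u) '' Set.univ = Set.Ioi 0 := by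
  rw [Set.image_univ, ← Function.comp_def (b * ·) exp, Set.range_comp, range_exp,
    Set.image_const_mul_Ioi_zero hb]

lemma hasDerivWithinAt_const_mul_exp (u : ℝ) :
    HasDerivWithinAt (fun u => b * exp u) (b * exp u) Set.univ u :=
  ((hasDerivAt_exp u).const_mul b).hasDerivWithinAt

lemma injOn_const_mul_exp (hb : 0 < b) : Set.InjOn (fun u => b * exp u) Set.univ :=
  fun _ _ _ _ h => exp_injective (mul_left_cancel₀ hb.ne' h)

lemma abs_const_mul_exp_smul (hb : 0 < b) (g : ℝ → E) :
    (fun u => |b * exp u| • g (b * exp u)) = fun u => b • exp u • g (b * exp u) := by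
  ext u
  rw [abs_of_pos (by positivity), mul_smul]

theorem integral_Ioi_zero_eq_smul_integral_comp_mul_exp (hb : 0 < b) (g : ℝ → E) :
    ∫ t in Set.Ioi 0, g t = b • ∫ u, exp u • g (b * exp u) := by
  rw [← image_const_mul_exp hb, integral_image_eq_integral_abs_deriv_smul MeasurableSet.univ
    (fun u _ => hasDerivWithinAt_const_mul_exp u) (injOn_const_mul_exp hb),
    abs_const_mul_exp_smul hb, setIntegral_univ, integral_smul]

theorem integrableOn_Ioi_zero_iff_integrable_comp_mul_exp (hb : 0 < b) (g : ℝ → E) :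
    IntegrableOn g (Set.Ioi 0) ↔ Integrable fun u => exp u • g (b * exp u) := by
  rw [← image_const_mul_exp hb, integrableOn_image_iff_integrableOn_abs_deriv_smul
    MeasurableSet.univ (fun u _ => hasDerivWithinAt_const_mul_exp u) (injOn_const_mul_exp hb),
    abs_const_mul_exp_smul hb, integrableOn_univ]
  exact integrable_smul_iff hb.ne' _

end ExpSubstitution

theorem integral_exp_smul_eq_two_smul_integral_cosh_smul {E : Type*} [NormedAddCommGroup E]
    [NormedSpace ℝ E] {h : ℝ → E} (h_even : ∀ u, h (-u) = h u)
    (hint : Integrable fun u => exp u • h u) :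
    ∫ u, exp u • h u = (2 : ℝ) • ∫ u in Set.Ioi 0, cosh u • h u := by
  have hint_neg : Integrable fun u => exp (-u) • h u := by
    simpa only [h_even] using hint.comp_neg
  calc ∫ u, exp u • h u
      = (∫ u in Set.Iic 0, exp u • h u) + ∫ u in Set.Ioi 0, exp u • h u :=
        (intervalIntegral.integral_Iic_add_Ioi hint.integrableOn hint.integrableOn).symm
    _ = (∫ u in Set.Ioi 0, exp (-u) • h u) + ∫ u in Set.Ioi 0, exp u • h u := by
        congr 1
        rw [← neg_zero, ← integral_comp_neg_Ioi, neg_zero]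
        simp only [h_even]
    _ = ∫ u in Set.Ioi 0, (2 : ℝ) • cosh u • h u := by
        rw [← integral_add hint_neg.integrableOn hint.integrableOn]
        congr 1 with u
        rw [smul_smul, cosh_eq, ← add_smul]
        ring_nf
    _ = (2 : ℝ) • ∫ u in Set.Ioi 0, cosh u • h u := integral_smul _ _

theorem integral_exp_mul_exp_neg_mul_cosh {x : ℝ}
    (hint : Integrable fun u => exp u * exp (-x * cosh u)) :
    ∫ u, exp u * exp (-x * cosh u) = 2 * besselK1 x := by
  simpa only [smul_eq_mul, besselK1, mul_comm (cosh _)] using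
    integral_exp_smul_eq_two_smul_integral_cosh_smul (h := fun u => exp (-x * cosh u))
      (fun u => by rw [cosh_neg]) hint

theorem integrableOn_exp_neg_mul_add_div_Ioi {a c : ℝ} (ha : 0 < a) (hc : 0 ≤ c) :
    IntegrableOn (fun t => exp (-(a * t + c / t))) (Set.Ioi 0) := by
  refine (exp_neg_integrableOn_Ioi 0 ha).mono' (by fun_prop) ?_
  filter_upwards [ae_restrict_mem measurableSet_Ioi] with t (ht : 0 < t)
  rw [norm_of_nonneg (exp_pos _).le, exp_le_exp]
  have : 0 ≤ c / t := by positivity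
  linarith

lemma mul_sqrt_div_self {a c : ℝ} (ha : 0 < a) : a * sqrt (c / a) = sqrt (a * c) := by
  rw [← sqrt_sq ha.le, ← sqrt_mul (sq_nonneg a), sqrt_sq ha.le]
  congr 1
  field_simp

lemma sqrt_div_mul_sqrt_mul {a c : ℝ} (ha : 0 < a) (hc : 0 ≤ c) :
    sqrt (c / a) * sqrt (a * c) = c := by
  rw [← sqrt_mul (by positivity), show c / a * (a * c) = c ^ 2 by field_simp, sqrt_sq hc]

theorem integral_exp_neg_mul_add_div_Ioi {a c : ℝ} (ha : 0 < a) (hc : 0 < c) :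
    ∫ t in Set.Ioi 0, exp (-(a * t + c / t)) = 2 * sqrt (c / a) * besselK1 (2 * sqrt (a * c)) := by
  set b := sqrt (c / a)
  have hb : 0 < b := sqrt_pos.2 (div_pos hc ha)
  have hsubst : ∀ u, exp (-(a * (b * exp u) + c / (b * exp u)))
      = exp (-(2 * sqrt (a * c)) * cosh u) := by
    intro u
    have hc_eq : c = b * sqrt (a * c) := (sqrt_div_mul_sqrt_mul ha hc.le).symm
    rw [← mul_assoc, mul_sqrt_div_self ha, cosh_eq, exp_neg u]
    congr 1
    field_simp
    linear_combination -hc_eq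
  have hint := (integrableOn_Ioi_zero_iff_integrable_comp_mul_exp hb _).1
    (integrableOn_exp_neg_mul_add_div_Ioi ha hc.le)
  simp only [smul_eq_mul, hsubst] at hint
  rw [integral_Ioi_zero_eq_smul_integral_comp_mul_exp hb]
  simp only [smul_eq_mul, hsubst]
  rw [integral_exp_mul_exp_neg_mul_cosh hint]
  ring

theorem stmt_2_general (a c s : ℝ) (ha : 0 < a) (hc : 0 < c) :
    ∫ t in Set.Ioi (0:ℝ), (1 - Real.exp (-c / t)) * (a * Real.exp (-a * (t + s)))
      = Real.exp (-a * s) *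
          (1 - 2 * Real.sqrt (a * c) * besselK1 (2 * Real.sqrt (a * c))) := by
  have hsplit : ∀ t, (1 - exp (-c / t)) * (a * exp (-a * (t + s)))
      = exp (-a * s) * (a * exp (-a * t) - a * exp (-(a * t + c / t))) := by
    intro t
    rw [show -a * (t + s) = -a * t + -a * s by ring,
      show -(a * t + c / t) = -c / t + -a * t by ring, exp_add, exp_add]
    ring
  have hexp : ∫ t in Set.Ioi 0, exp (-a * t) = a⁻¹ := by
    simpa [neg_div_neg_eq] using integral_exp_mul_Ioi (neg_lt_zero.2 ha) 0
  simp only [hsplit]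
  rw [integral_const_mul, integral_sub ((exp_neg_integrableOn_Ioi 0 ha).const_mul a)
      ((integrableOn_exp_neg_mul_add_div_Ioi ha hc.le).const_mul a),
    integral_const_mul, integral_const_mul, hexp, integral_exp_neg_mul_add_div_Ioi ha hc,
    mul_inv_cancel₀ ha.ne', ← mul_sqrt_div_self ha]
  ring

theorem stmt_2 (a c s : ℝ) (ha : 0 < a) (hc : 0 < c) (hs : 0 ≤ s) :
    ∫ t in Set.Ioi (0:ℝ), (1 - Real.exp (-c / t)) * (a * Real.exp (-a * (t + s)))
      = Real.exp (-a * s) *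
          (1 - 2 * Real.sqrt (a * c) * besselK1 (2 * Real.sqrt (a * c))) :=
  stmt_2_general a c s ha hc
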